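/- Let (S, 𝔫) be a commutative Noetherian local ring and I an 𝔫-primary ideal with v_S(I) ≥ 2 which is not a power of 𝔫; write R = S/I with maximal ideal 𝔪 = 𝔫/I. Then s(R) = ℓ_S(R) − edim(R) if and only if R is a stretched Artinian local ring (i.e. 𝔪² is a principal ideal). In this case, v_S(I) = 2 and μ_R(𝔪²) = 1. -/

import Mathlib

/-!
Write `R = S ⧸ I` and `𝔪` for its maximal ideal, so `𝔪 ^ (s + 1) = 0 ≠ 𝔪 ^ s`. Filtering `R` by
the powers of `𝔪` gives `ℓ(R) = 1 + edim R + ℓ(𝔪²)`, and every layer `𝔪ⁱ/𝔪ⁱ⁺¹` with `i ≤ s` is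
nonzero by Nakayama, so `ℓ(𝔪²) ≥ s - 1`. Equality holds iff the layers `i = 2, …, s` have length
one. By Nakayama, `𝔪ⁱ/𝔪ⁱ⁺¹` has length at most one iff `𝔪ⁱ` is principal, and if `𝔪²` is
principal then so is every `𝔪ⁱ` with `i ≥ 2`; hence `s = ℓ(R) - edim R` iff `𝔪²` is principal.
If then `v ≥ 3`, i.e. `I ⊆ 𝔫³`, Nakayama lifts a generator of `𝔪²` to one of `𝔫²`, so `𝔫ᵛ` is
principal; as `I ⊊ 𝔫ᵛ`, this forces `I ⊆ 𝔫 𝔫ᵛ = 𝔫ᵛ⁺¹`, against the maximality of `v`.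
-/

open IsLocalRing

noncomputable def moduleLength (R M : Type*) [Ring R] [AddCommGroup M] [Module R M] :
    WithBot ℕ∞ :=
  Order.krullDim (Submodule R M)

theorem moduleLength_eq_length (R M : Type*) [Ring R] [AddCommGroup M] [Module R M] :
    moduleLength R M = Module.length R M :=
  (Module.coe_length R M).symm

section Length

variable {R M : Type*} [Ring R] [AddCommGroup M] [Module R M]

theorem Submodule.isPrincipal_top_iff (N : Submodule R M) :
    (⊤ : Submodule R N).IsPrincipal ↔ N.IsPrincipal := by
  simp only [Submodule.isPrincipal_iff]
  constructor
  · rintro ⟨a, ha⟩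
    have := congrArg (Submodule.map N.subtype) ha
    rw [Submodule.map_top, Submodule.range_subtype, Submodule.map_span, Set.image_singleton] at this
    exact ⟨a, this⟩
  · rintro ⟨a, ha⟩
    have haN : a ∈ N := ha ▸ Submodule.mem_span_singleton_self a
    refine ⟨⟨a, haN⟩, Submodule.map_injective_of_injective N.injective_subtype ?_⟩
    rw [N.map_subtype_top, Submodule.map_span, Set.image_singleton]
    exact ha

theorem Module.isPrincipal_top_of_length_le_one (h : Module.length R M ≤ 1) :
    (⊤ : Submodule R M).IsPrincipal := by
  rcases Order.le_one_iff.mp h with h0 | h1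
  · have := Module.length_eq_zero_iff.mp h0
    exact ⟨0, Subsingleton.elim _ _⟩
  · have := Module.length_eq_one_iff.mp h1
    infer_instance

end Length

theorem Module.length_submodule_eq_length_smul_add {R M : Type*} [CommRing R] [AddCommGroup M]
    [Module R M] (I : Ideal R) (N : Submodule R M) :
    Module.length R N =
      Module.length R (I • N : Submodule R M) + Module.length R (N ⧸ I • (⊤ : Submodule R N)) := by
  have hmap : Submodule.map N.subtype (I • ⊤ : Submodule R N) = (I • N : Submodule R M) := by
    rw [Submodule.map_smul'', Submodule.map_subtype_top]
  rw [Module.length_eq_add_of_exact _ _ (I • ⊤ : Submodule R N).injective_subtype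
    (Submodule.mkQ_surjective _) (LinearMap.exact_subtype_mkQ _),
    (Submodule.equivMapOfInjective _ N.injective_subtype _).length_eq, hmap]

namespace IsLocalRing

variable {A : Type*} [CommRing A] [IsLocalRing A]

local notation "𝔪" => maximalIdeal A

theorem length_quotient_maximalIdeal : Module.length A (A ⧸ 𝔪) = 1 :=
  have : IsSimpleModule A (A ⧸ 𝔪) :=
    isSimpleModule_iff_isCoatom.mpr (Ideal.isMaximal_def.mp (maximalIdeal.isMaximal A))
  Module.length_eq_one _ _

section Module

variable {M : Type*} [AddCommGroup M] [Module A M]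

theorem length_le_one_of_span_singleton_eq_top {x : M} (hx : Submodule.span A {x} = ⊤)
    (hann : ∀ a ∈ 𝔪, a • x = 0) : Module.length A M ≤ 1 := by
  have hker : 𝔪 ≤ LinearMap.ker (LinearMap.toSpanSingleton A M x) := hann
  have hsurj : Function.Surjective ((𝔪).liftQ _ hker) := by
    rw [← LinearMap.range_eq_top, Submodule.range_liftQ, LinearMap.range_toSpanSingleton, hx]
  exact (Module.length_le_of_surjective _ hsurj).trans length_quotient_maximalIdeal.le

variable [Module.Finite A M]

theorem one_le_length_quotient_smul_top [Nontrivial M] :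
    1 ≤ Module.length A (M ⧸ 𝔪 • (⊤ : Submodule A M)) := by
  have : Nontrivial (M ⧸ 𝔪 • (⊤ : Submodule A M)) :=
    Submodule.Quotient.nontrivial_iff.mpr
      (Submodule.top_ne_ideal_smul_of_le_jacobson_annihilator (maximalIdeal_le_jacobson _)).symm
  exact Order.one_le_iff_pos.mpr Module.length_pos

theorem length_quotient_smul_top_le_one_iff :
    Module.length A (M ⧸ 𝔪 • (⊤ : Submodule A M)) ≤ 1 ↔ (⊤ : Submodule A M).IsPrincipal := by
  constructor
  · intro h
    obtain ⟨x, hx⟩ := (Module.isPrincipal_top_of_length_le_one h).principal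
    obtain ⟨x, rfl⟩ := Submodule.mkQ_surjective _ x
    refine ⟨x, ((map_mkQ_eq_top (N := Submodule.span A {x})).mp ?_).symm⟩
    rw [Submodule.map_span, Set.image_singleton, ← hx]
  · rintro ⟨x, hx⟩
    refine length_le_one_of_span_singleton_eq_top (x := Submodule.mkQ _ x) ?_ fun a ha => ?_
    · rw [← Set.image_singleton, ← Submodule.map_span, ← hx, Submodule.map_top,
        Submodule.range_mkQ]
    · rw [← map_smul, Submodule.mkQ_apply, Submodule.Quotient.mk_eq_zero]
      exact Submodule.smul_mem_smul ha Submodule.mem_top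

end Module

theorem _root_.Ideal.isPrincipal_pow_three_of_isPrincipal_sq {J : Ideal A}
    (h : (J ^ 2).IsPrincipal) : (J ^ 3).IsPrincipal := by
  obtain ⟨y, hy⟩ := h
  change J ^ 2 = Ideal.span {y} at hy
  have hJ3 : J ^ 3 = J * J ^ 2 := pow_succ' J 2
  by_cases hunit : ∃ g ∈ J, ∃ h ∈ J, ∃ u : Aˣ, g * h = u * y
  · -- `y = u⁻¹ g h`, so `r y = u⁻¹ g (r h) ∈ (g y)` for `r ∈ J`, as `r h ∈ J² = (y)`.
    obtain ⟨g, hg, h, hh, u, hgh⟩ := hunit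
    refine ⟨g * y, le_antisymm ?_ ?_⟩
    · rw [hJ3, hy, Ideal.mul_le]
      intro r hr t ht
      obtain ⟨a, rfl⟩ := Ideal.mem_span_singleton'.mp ht
      have hrh : r * h ∈ Ideal.span {y} := hy ▸ sq J ▸ Ideal.mul_mem_mul hr hh
      obtain ⟨b, hb⟩ := Ideal.mem_span_singleton'.mp hrh
      refine Ideal.mem_span_singleton'.mpr ⟨a * ↑u⁻¹ * b, ?_⟩
      linear_combination a * ↑u⁻¹ * g * hb + a * ↑u⁻¹ * r * hgh + a * r * y * u.inv_mul
    · rw [Submodule.span_le, Set.singleton_subset_iff, hJ3]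
      exact Ideal.mul_mem_mul hg (hy ▸ Ideal.mem_span_singleton_self y)
  · have hsq : J ^ 2 ≤ 𝔪 • J ^ 2 := by
      rw [sq, Ideal.mul_le]
      intro g hg h hh
      obtain ⟨c, hc⟩ := Ideal.mem_span_singleton'.mp (hy ▸ sq J ▸ Ideal.mul_mem_mul hg hh)
      have hc𝔪 : c ∈ 𝔪 := fun hcu => hunit ⟨g, hg, h, hh, hcu.unit, hc ▸ rfl⟩
      rw [← hc, ← sq, hy, Ideal.smul_eq_mul]
      exact Ideal.mul_mem_mul hc𝔪 (Ideal.mem_span_singleton_self y)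
    have hbot : J ^ 2 = ⊥ := Submodule.eq_bot_of_le_smul_of_le_jacobson_bot _ _
      (hy ▸ Submodule.fg_span_singleton y) hsq (maximalIdeal_le_jacobson _)
    rw [hJ3, hbot, Ideal.mul_bot]
    exact bot_isPrincipal

theorem _root_.Ideal.isPrincipal_pow_of_isPrincipal_sq {J : Ideal A} (h : (J ^ 2).IsPrincipal) :
    ∀ n, 2 ≤ n → (J ^ n).IsPrincipal
  | 2, _ => h
  | 3, _ => Ideal.isPrincipal_pow_three_of_isPrincipal_sq h
  | n + 4, _ => by
    rw [show n + 4 = n + 2 + 2 from rfl, pow_add]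
    exact (Ideal.isPrincipalSubmonoid A).mul_mem
      (Ideal.isPrincipal_pow_of_isPrincipal_sq h (n + 2) (by omega)) h

theorem length_pow_eq_length_pow_succ_add (i : ℕ) :
    Module.length A ↥(𝔪 ^ i) = Module.length A ↥(𝔪 ^ (i + 1)) +
      Module.length A (↥(𝔪 ^ i) ⧸ 𝔪 • (⊤ : Submodule A ↥(𝔪 ^ i))) := by
  rw [Module.length_submodule_eq_length_smul_add 𝔪, Ideal.smul_eq_mul, ← pow_succ']

theorem length_eq_length_sq_add_length_cotangentSpace_add_one :
    Module.length A A = Module.length A ↥(𝔪 ^ 2) + Module.length A (CotangentSpace A) + 1 := by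
  rw [Module.length_eq_add_of_exact _ _ (𝔪).injective_subtype (𝔪).mkQ_surjective
    (LinearMap.exact_subtype_mkQ _), length_quotient_maximalIdeal,
    Module.length_submodule_eq_length_smul_add 𝔪, Ideal.smul_eq_mul, ← sq]
  rfl

section Noetherian

variable [IsNoetherianRing A]

theorem isPrincipal_pow_iff_length_le_one (i : ℕ) :
    (𝔪 ^ i).IsPrincipal ↔ Module.length A (↥(𝔪 ^ i) ⧸ 𝔪 • (⊤ : Submodule A ↥(𝔪 ^ i))) ≤ 1 := by
  rw [length_quotient_smul_top_le_one_iff, Submodule.isPrincipal_top_iff]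

theorem natCast_sub_le_length_pow {s : ℕ} (hs : 𝔪 ^ s ≠ ⊥) (i : ℕ) :
    ((s + 1 - i : ℕ) : ℕ∞) ≤ Module.length A ↥(𝔪 ^ i) := by
  induction hk : s + 1 - i generalizing i with
  | zero => simp
  | succ k ih =>
    have : Nontrivial ↥(𝔪 ^ i) := Submodule.nontrivial_iff_ne_bot.mpr
      fun h => hs (le_bot_iff.mp (h ▸ Ideal.pow_le_pow_right (by omega)))
    rw [length_pow_eq_length_pow_succ_add, Nat.cast_succ]
    exact add_le_add (ih (i + 1) (by omega)) one_le_length_quotient_smul_top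

theorem length_pow_le_of_isPrincipal {s i : ℕ} (hs : 𝔪 ^ (s + 1) = ⊥)
    (h : ∀ j, i ≤ j → (𝔪 ^ j).IsPrincipal) : Module.length A ↥(𝔪 ^ i) ≤ (s + 1 - i : ℕ) := by
  induction hk : s + 1 - i generalizing i with
  | zero =>
    have hbot : 𝔪 ^ i = ⊥ := le_bot_iff.mp ((Ideal.pow_le_pow_right (by omega)).trans hs.le)
    rw [hbot, Module.length_bot]
    exact zero_le
  | succ k ih =>
    rw [length_pow_eq_length_pow_succ_add, Nat.cast_succ]
    exact add_le_add (ih (fun j hj => h j (by omega)) (by omega))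
      ((isPrincipal_pow_iff_length_le_one i).mp (h i le_rfl))

end Noetherian

theorem length_eq_add_length_cotangentSpace_iff [IsArtinianRing A] {s : ℕ} (hs0 : s ≠ 0)
    (hs : 𝔪 ^ s ≠ ⊥) (hs1 : 𝔪 ^ (s + 1) = ⊥) :
    Module.length A A = s + Module.length A (CotangentSpace A) ↔ (𝔪 ^ 2).IsPrincipal := by
  have hA := length_eq_length_sq_add_length_cotangentSpace_add_one (A := A)
  have hfin : Module.length A A ≠ ⊤ := Module.length_ne_top
  have h23 := length_pow_eq_length_pow_succ_add (A := A) 2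
  have hlow2 := natCast_sub_le_length_pow hs 2
  have hlow3 := natCast_sub_le_length_pow hs 3
  have hup : (𝔪 ^ 2).IsPrincipal → Module.length A ↥(𝔪 ^ 2) ≤ (s + 1 - 2 : ℕ) := fun h =>
    length_pow_le_of_isPrincipal hs1 fun j hj => Ideal.isPrincipal_pow_of_isPrincipal_sq h j hj
  rw [isPrincipal_pow_iff_length_le_one] at hup ⊢
  rw [hA, h23] at hfin ⊢
  rw [h23] at hlow2 hup
  -- With `a = ℓ(𝔪³) ≥ s - 2` and `d = ℓ(𝔪²/𝔪³)`: `ℓ(A) = a + d + e + 1`, `a + d ≥ s - 1`, and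
  -- `𝔪²` is principal iff `d ≤ 1`.
  generalize Module.length A ↥(𝔪 ^ 3) = a at *
  generalize Module.length A (↥(𝔪 ^ 2) ⧸ 𝔪 • (⊤ : Submodule A ↥(𝔪 ^ 2))) = d at *
  generalize Module.length A (CotangentSpace A) = e at *
  lift a to ℕ using by simp_all
  lift d to ℕ using by simp_all
  lift e to ℕ using by simp_all
  norm_cast at *
  omega

end IsLocalRing

section Quotient

variable {S : Type*} [CommRing S] [IsLocalRing S]

local notation "𝔫" => maximalIdeal S

theorem IsLocalRing.length_cotangentSpace_quotient (I : Ideal S) [IsLocalRing (S ⧸ I)] :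
    Module.length (S ⧸ I) (CotangentSpace (S ⧸ I)) =
      Module.length S (↥𝔫 ⧸ Submodule.comap (𝔫).subtype (𝔫 ^ 2 ⊔ I)) := by
  have hsurj : Function.Surjective (algebraMap S (S ⧸ I)) := Ideal.Quotient.mk_surjective
  have hmap : (𝔫).map (algebraMap S (S ⧸ I)) = maximalIdeal (S ⧸ I) :=
    map_maximalIdeal_of_surjective _ hsurj
  have hker : RingHom.ker (algebraMap S (S ⧸ I)) = I := Ideal.mk_ker
  have hcomap : (maximalIdeal (S ⧸ I)).comap (algebraMap S (S ⧸ I)) =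
      RingHom.ker (algebraMap S (S ⧸ I)) ⊔ 𝔫 := by
    rw [← hmap, Ideal.comap_map_of_surjective' _ hsurj, sup_comm]
  have hle : 𝔫 ≤ (maximalIdeal (S ⧸ I)).comap (Algebra.ofId S (S ⧸ I)) :=
    fun x hx => hmap ▸ Ideal.mem_map_of_mem _ hx
  let φ : ↥𝔫 →ₗ[S] CotangentSpace (S ⧸ I) :=
    Ideal.mapCotangent _ _ (Algebra.ofId S (S ⧸ I)) hle ∘ₗ (𝔫).toCotangent
  have hφ : Function.Surjective φ :=
    (Ideal.mapCotangent_surjective_of_comap_eq hsurj hcomap).comp (𝔫).toCotangent_surjective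
  have hkerφ : LinearMap.ker φ = Submodule.comap (𝔫).subtype (𝔫 ^ 2 ⊔ I) := by
    ext x
    rw [LinearMap.mem_ker, LinearMap.comp_apply, Ideal.mapCotangent_toCotangent,
      ← LinearMap.mem_ker, Ideal.mem_toCotangent_ker, Submodule.mem_comap, Submodule.subtype_apply]
    change algebraMap S (S ⧸ I) x ∈ maximalIdeal (S ⧸ I) ^ 2 ↔ _
    rw [← hmap, ← Ideal.map_pow, ← Ideal.mem_comap, Ideal.comap_map_of_surjective' _ hsurj, hker]
  rw [← Module.length_eq_of_surjective hsurj, ← (φ.quotKerEquivOfSurjective hφ).length_eq, hkerφ]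

theorem Ideal.isPrincipal_of_isPrincipal_map_quotient {I J : Ideal S} (hJ : J.FG)
    (hI : I ≤ 𝔫 * J) (h : (J.map (Ideal.Quotient.mk I)).IsPrincipal) : J.IsPrincipal := by
  obtain ⟨x, hx⟩ := h
  obtain ⟨y, hyJ, rfl⟩ := (Ideal.mem_map_iff_of_surjective _ Ideal.Quotient.mk_surjective).mp
    (hx ▸ Submodule.mem_span_singleton_self _)
  have hspan : J.map (Ideal.Quotient.mk I) = (Ideal.span {y}).map (Ideal.Quotient.mk I) := by
    rw [Ideal.map_span, Set.image_singleton]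
    exact hx
  have hJy : J ≤ Ideal.span {y} ⊔ 𝔫 • J := calc
    J ≤ J ⊔ I := le_sup_left
    _ = Ideal.span {y} ⊔ I := by
      simpa only [Ideal.comap_map_of_surjective' _ Ideal.Quotient.mk_surjective, Ideal.mk_ker]
        using congrArg (Ideal.comap (Ideal.Quotient.mk I)) hspan
    _ ≤ Ideal.span {y} ⊔ 𝔫 • J := sup_le_sup_left hI _
  refine ⟨y, le_antisymm ?_ ?_⟩
  · exact Submodule.le_of_le_smul_of_le_jacobson_bot hJ (maximalIdeal_le_jacobson _) hJy
  · rwa [Submodule.span_le, Set.singleton_subset_iff]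

theorem Ideal.le_maximalIdeal_mul_of_lt {I J : Ideal S} (hJ : J.IsPrincipal) (hIJ : I < J) :
    I ≤ 𝔫 * J := by
  obtain ⟨z, hz⟩ := hJ
  change J = Ideal.span {z} at hz
  intro t ht
  obtain ⟨c, rfl⟩ := Ideal.mem_span_singleton'.mp (hz ▸ hIJ.le ht)
  have hc : c ∈ 𝔫 := fun hcu => hIJ.not_ge <| by
    rw [hz, Ideal.span_le, Set.singleton_subset_iff]
    simpa [← mul_assoc] using I.mul_mem_left ↑hcu.unit⁻¹ ht
  exact Ideal.mul_mem_mul hc (hz ▸ Ideal.mem_span_singleton_self z)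

theorem IsLocalRing.eq_two_of_isPrincipal_map_sq [IsNoetherianRing S] {I : Ideal S} {v : ℕ}
    (hv : IsGreatest {n : ℕ | I ≤ 𝔫 ^ n} v) (hv2 : 2 ≤ v) (hIv : I ≠ 𝔫 ^ v)
    (h : ((𝔫 ^ 2).map (Ideal.Quotient.mk I)).IsPrincipal) : v = 2 := by
  by_contra hne
  have hI3 : I ≤ 𝔫 * 𝔫 ^ 2 := by
    rw [← pow_succ']
    exact hv.1.trans (Ideal.pow_le_pow_right (by omega))
  have hsq := Ideal.isPrincipal_of_isPrincipal_map_quotient (Ideal.fg_of_isNoetherianRing _) hI3 h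
  have hIv1 : I ≤ 𝔫 ^ (v + 1) := by
    rw [pow_succ']
    exact Ideal.le_maximalIdeal_mul_of_lt (Ideal.isPrincipal_pow_of_isPrincipal_sq hsq v hv2)
      (lt_of_le_of_ne hv.1 hIv)
  have := hv.2 hIv1
  omega

end Quotient

theorem top_socle_degree_eq_iff_stretched_general
    (S : Type*) [CommRing S] [IsNoetherianRing S] [IsLocalRing S]
    (I : Ideal S)
    (hnotpow : ∀ n : ℕ, I ≠ maximalIdeal S ^ n)
    (v : ℕ) (hv : IsGreatest {n : ℕ | I ≤ maximalIdeal S ^ n} v) (hv2 : 2 ≤ v)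
    (ℓ : ℕ) (hℓ : moduleLength S (S ⧸ I) = (ℓ : ℕ∞))
    (e : ℕ)
    (he : moduleLength S
        (↥(maximalIdeal S) ⧸
          Submodule.comap (maximalIdeal S).subtype (maximalIdeal S ^ 2 ⊔ I)) =
        ((e : ℕ∞) : WithBot ℕ∞))
    (s : ℕ)
    (hs : IsGreatest {n : ℕ |
        ((maximalIdeal S).map (Ideal.Quotient.mk I)) ^ n ≠ ⊥} s) :
    (((s : ℤ) = (ℓ : ℤ) - e) ↔
      (((maximalIdeal S).map (Ideal.Quotient.mk I)) ^ 2).IsPrincipal) ∧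
    ((s : ℤ) = (ℓ : ℤ) - e →
      v = 2 ∧
      ((∃ x : S ⧸ I, ((maximalIdeal S).map (Ideal.Quotient.mk I)) ^ 2 = Ideal.span {x}) ∧
        ((maximalIdeal S).map (Ideal.Quotient.mk I)) ^ 2 ≠ ⊥)) := by
  have : Nontrivial (S ⧸ I) := Ideal.Quotient.nontrivial_iff.mpr (by simpa using hnotpow 0)
  have : IsLocalRing (S ⧸ I) := .of_surjective' _ Ideal.Quotient.mk_surjective
  have hm := map_maximalIdeal_of_surjective _ (Ideal.Quotient.mk_surjective (I := I))
  rw [moduleLength_eq_length, WithBot.coe_inj] at hℓ he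
  have hℓ' : Module.length (S ⧸ I) (S ⧸ I) = ℓ := by
    rwa [← Module.length_eq_of_surjective Ideal.Quotient.mk_surjective]
  have he' : Module.length (S ⧸ I) (CotangentSpace (S ⧸ I)) = e := by
    rwa [length_cotangentSpace_quotient]
  have : IsArtinianRing (S ⧸ I) := (isFiniteLength_iff_isNoetherian_isArtinian.mp
    (Module.length_ne_top_iff.mp (hℓ' ▸ ENat.natCast_ne_top ℓ))).2
  rw [hm] at hs ⊢
  have hsq : maximalIdeal (S ⧸ I) ^ 2 ≠ ⊥ := by
    rw [← hm, ← Ideal.map_pow, Ne, Ideal.map_eq_bot_iff_le_ker, Ideal.mk_ker]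
    exact fun h => hnotpow 2 (le_antisymm (hv.1.trans (Ideal.pow_le_pow_right hv2)) h)
  have hs2 : 2 ≤ s := hs.2 hsq
  have hs1 : maximalIdeal (S ⧸ I) ^ (s + 1) = ⊥ :=
    by_contra fun h => Nat.not_succ_le_self s (hs.2 h)
  have key := length_eq_add_length_cotangentSpace_iff (by omega) hs.1 hs1
  rw [hℓ', he'] at key
  have hiff : (s : ℤ) = ℓ - e ↔ (maximalIdeal (S ⧸ I) ^ 2).IsPrincipal := by
    have hcast : (ℓ : ℕ∞) = s + e ↔ ℓ = s + e := by norm_cast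
    rw [← key, hcast]
    omega
  refine ⟨hiff, fun h => ⟨?_, (hiff.mp h).principal, hsq⟩⟩
  exact eq_two_of_isPrincipal_map_sq hv hv2 (hnotpow v) (by rw [Ideal.map_pow, hm]; exact hiff.mp h)

/-- Let `(S, 𝔫)` be a Noetherian local ring and `I` an `𝔫`-primary ideal
with `v_S(I) ≥ 2` which is not a power of `𝔫`; let `R = S ⧸ I` with maximal ideal
`𝔪 = 𝔫/I`, `ℓ = ℓ_S(R)`, `e = edim R`, and `s` the top socle degree of `R`.
Then `s = ℓ − e` iff `R` is stretched (i.e. `𝔪²` is principal); and in this case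
`v_S(I) = 2` and `μ_R(𝔪²) = 1`. -/
theorem top_socle_degree_eq_iff_stretched
    (S : Type*) [CommRing S] [IsNoetherianRing S] [IsLocalRing S]
    (I : Ideal S) (hprim : I.radical = maximalIdeal S)
    (hnotpow : ∀ n : ℕ, I ≠ maximalIdeal S ^ n)
    (v : ℕ) (hv : IsGreatest {n : ℕ | I ≤ maximalIdeal S ^ n} v) (hv2 : 2 ≤ v)
    (ℓ : ℕ) (hℓ : moduleLength S (S ⧸ I) = (ℓ : ℕ∞))
    (e : ℕ)
    (he : moduleLength S
        (↥(maximalIdeal S) ⧸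
          Submodule.comap (maximalIdeal S).subtype (maximalIdeal S ^ 2 ⊔ I)) =
        ((e : ℕ∞) : WithBot ℕ∞))
    (s : ℕ)
    (hs : IsGreatest {n : ℕ |
        ((maximalIdeal S).map (Ideal.Quotient.mk I)) ^ n ≠ ⊥} s) :
    (((s : ℤ) = (ℓ : ℤ) - e) ↔
      (((maximalIdeal S).map (Ideal.Quotient.mk I)) ^ 2).IsPrincipal) ∧
    ((s : ℤ) = (ℓ : ℤ) - e →
      v = 2 ∧
      ((∃ x : S ⧸ I, ((maximalIdeal S).map (Ideal.Quotient.mk I)) ^ 2 = Ideal.span {x}) ∧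
        ((maximalIdeal S).map (Ideal.Quotient.mk I)) ^ 2 ≠ ⊥)) :=
  top_socle_degree_eq_iff_stretched_general S I hnotpow v hv hv2 ℓ hℓ e he s hs
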